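/- Let D be a digraph with weight function c, and suppose D contains at least one special-simple closed walk of negative total weight. Then any special-simple closed walk of negative total weight that has the minimum number of arcs among all such walks is a directed cycle (all of its vertices are distinct except for the coinciding endpoints). -/

import Mathlib

namespace NearlyConservativePaper

variable {V : Type} [Fintype V] [DecidableEq V]

/-- A weighted digraph given by adjacency and arc weights. -/
structure WDigraph (V : Type) where
  Adj : V → V → Prop
  c : V → V → ℝ

/-- A step `(u, v, b)` of a walk: `b = false` means an original arc from `u` to `v`,
`b = true` means the added loose arc from `u` to `v`. -/
abbrev Step (V : Type) := V × V × Bool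

/-- `IsWalk AS s t l`: `l` is a walk from `s` to `t` using arcs allowed by `AS`. -/
def IsWalk (AS : V → V → Bool → Prop) : V → V → List (Step V) → Prop
  | s, t, [] => s = t
  | s, t, (u, v, b) :: l => u = s ∧ AS u v b ∧ IsWalk AS v t l

/-- The list of head-vertices of the steps of a walk. -/
def heads (l : List (Step V)) : List V := l.map fun a => a.2.1

/-- Total weight of a walk with respect to the step-weight `w`. -/
def wSum (w : V → V → Bool → ℝ) (l : List (Step V)) : ℝ :=
  (l.map fun a => w a.1 a.2.1 a.2.2).sum

/-- A directed cycle: a nonempty closed walk whose vertices are pairwise distinct. -/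
def IsCycle (AS : V → V → Bool → Prop) (s : V) (l : List (Step V)) : Prop :=
  IsWalk AS s s l ∧ l ≠ [] ∧ (heads l).Nodup

/-- A directed (simple) path. -/
def IsPath (AS : V → V → Bool → Prop) (s t : V) (l : List (Step V)) : Prop :=
  IsWalk AS s t l ∧ (s :: heads l).Nodup

/-- Nearly conservative: every negative directed cycle consists of exactly two arcs. -/
def NearlyCons (AS : V → V → Bool → Prop) (w : V → V → Bool → ℝ) : Prop :=
  ∀ s l, IsCycle AS s l → wSum w l < 0 → l.length = 2

/-- Minimum weight of a directed path from `s` to `t`, `+∞` if there is none. -/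
noncomputable def distW (AS : V → V → Bool → Prop) (w : V → V → Bool → ℝ)
    (s t : V) : EReal :=
  sInf {x : EReal | ∃ l, IsPath AS s t l ∧ (wSum w l : EReal) = x}

namespace WDigraph

variable (D : WDigraph V)

/-- The arc `uv` is special if `vu` is also an arc and `c(uv) + c(vu) < 0`. -/
def Special (u v : V) : Prop := D.Adj u v ∧ D.Adj v u ∧ D.c u v + D.c v u < 0

/-- The arcs of the original digraph `D` (only `b = false` steps). -/
def baseArcs (u v : V) (b : Bool) : Prop := b = false ∧ D.Adj u v

/-- The arcs of the improved digraph: original arcs and, for every special arc `vu`,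
an added loose ordinary arc from `u` to `v`. -/
def ImpArc (u v : V) (b : Bool) : Prop := if b then D.Special v u else D.Adj u v

/-- The weight of a step of the improved digraph: the loose arc added for the
special arc `vu` has weight `-c(vu)`. -/
def impW (u v : V) (b : Bool) : ℝ := if b then -(D.c v u) else D.c u v

/-- A walk is special-simple if it contains every special arc at most once and never
contains both a special arc and its opposite. -/
def SpecialSimple (l : List (Step V)) : Prop :=
  ∀ u v, D.Special u v → l.count (u, v, false) + l.count (v, u, false) ≤ 1

/-- The associated undirected graph `F`. -/
def F : SimpleGraph V where
  Adj u v := u ≠ v ∧ D.Special u v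
  symm := by
    constructor
    rintro u v ⟨hne, h1, h2, h3⟩
    exact ⟨hne.symm, h2, h1, by linarith⟩
  loopless := by constructor; rintro u ⟨hne, -⟩; exact hne rfl

/-- The weight of a walk of `F`, each edge being traversed as the special arc pointing
in the direction of the traversal. -/
def fWeight {s t : V} (p : D.F.Walk s t) : ℝ :=
  (p.darts.map fun d => D.c d.toProd.1 d.toProd.2).sum

/-- The improved digraph with the original (special) arcs in `Rem` removed. -/
def arcsMinus (Rem : V → V → Prop) (u v : V) (b : Bool) : Prop :=
  D.ImpArc u v b ∧ ¬ (b = false ∧ Rem u v)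

end WDigraph

/-- The special arcs of the negative tree containing `t₀` (to be removed from `D`). -/
def remT (D : WDigraph V) (t₀ : V) : V → V → Prop :=
  fun x y => D.F.Adj x y ∧ D.F.Reachable t₀ x


section Aux
variable {V : Type} [Fintype V] [DecidableEq V]

lemma isWalk_append {AS : V → V → Bool → Prop} {s t : V} {l1 l2 : List (Step V)} :
    IsWalk AS s t (l1 ++ l2) ↔ ∃ m, IsWalk AS s m l1 ∧ IsWalk AS m t l2 := by
  induction l1 generalizing s with
  | nil =>
    simp only [List.nil_append]
    constructor
    · intro h; exact ⟨s, rfl, h⟩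
    · rintro ⟨m, rfl, h⟩; exact h
  | cons x xs ih =>
    obtain ⟨u, v, b⟩ := x
    simp only [List.cons_append, IsWalk]
    constructor
    · rintro ⟨rfl, ha, hrest⟩
      obtain ⟨m, h1, h2⟩ := ih.1 hrest
      exact ⟨m, ⟨rfl, ha, h1⟩, h2⟩
    · rintro ⟨m, ⟨rfl, ha, h1⟩, h2⟩
      exact ⟨rfl, ha, ih.2 ⟨m, h1, h2⟩⟩

lemma isWalk_snoc_end {AS : V → V → Bool → Prop} {s m : V} {L : List (Step V)}
    {e : Step V} (h : IsWalk AS s m (L ++ [e])) : m = e.2.1 := by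
  obtain ⟨k, -, h2⟩ := isWalk_append.1 h
  obtain ⟨u, v, b⟩ := e
  obtain ⟨-, -, h3⟩ := h2
  exact h3.symm

lemma wSum_append (w : V → V → Bool → ℝ) (l1 l2 : List (Step V)) :
    wSum w (l1 ++ l2) = wSum w l1 + wSum w l2 := by
  simp [wSum]

lemma specialSimple_sublist {D : WDigraph V} {l l' : List (Step V)}
    (hsub : l'.Sublist l) (h : D.SpecialSimple l) : D.SpecialSimple l' := by
  intro u v hsp
  have h1 := hsub.count_le (u, v, false)
  have h2 := hsub.count_le (v, u, false)
  have := h u v hsp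
  omega

lemma exists_dup_decomp (l : List (Step V)) (h : ¬ (heads l).Nodup) :
    ∃ (L1 L2 L3 : List (Step V)) (e1 e2 : Step V),
      l = L1 ++ e1 :: (L2 ++ e2 :: L3) ∧ e1.2.1 = e2.2.1 := by
  induction l with
  | nil => simp [heads] at h
  | cons x xs ih =>
    by_cases hmem : x.2.1 ∈ heads xs
    · obtain ⟨e, he, heq⟩ := List.mem_map.1 hmem
      obtain ⟨L2, L3, rfl⟩ := List.append_of_mem he
      exact ⟨[], L2, L3, x, e, by simp, heq.symm⟩
    · have hx : ¬ (heads xs).Nodup := by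
        intro hn
        exact h (List.nodup_cons.2 ⟨hmem, hn⟩)
      obtain ⟨L1, L2, L3, e1, e2, rfl, heq⟩ := ih hx
      exact ⟨x :: L1, L2, L3, e1, e2, rfl, heq⟩

end Aux

/-- If `l` is a special-simple closed walk of negative total weight with the
minimum number of arcs among all such walks, then `l` is a directed cycle (all of its
vertices are distinct except for the coinciding endpoints). -/
theorem statement_16 {V : Type} [Fintype V] [DecidableEq V] (D : WDigraph V)
    (hloop : ∀ v, ¬ D.Adj v v)
    (s : V) (l : List (Step V))
    (hw : IsWalk D.ImpArc s s l) (hss : D.SpecialSimple l)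
    (hneg : wSum D.impW l < 0)
    (hmin : ∀ (s' : V) (l' : List (Step V)),
      IsWalk D.ImpArc s' s' l' → D.SpecialSimple l' → wSum D.impW l' < 0 →
        l.length ≤ l'.length) :
    l ≠ [] ∧ (heads l).Nodup := by
  have hne : l ≠ [] := by
    rintro rfl
    simp [wSum] at hneg
  refine ⟨hne, ?_⟩
  by_contra hdup
  obtain ⟨L1, L2, L3, e1, e2, hl, heq⟩ := exists_dup_decomp l hdup
  set P1 : List (Step V) := L1 ++ [e1] with hP1
  set P2 : List (Step V) := L2 ++ [e2] with hP2
  set P3 : List (Step V) := L3 with hP3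
  have hldecomp : l = P1 ++ (P2 ++ P3) := by
    simp [hP1, hP2, hP3, hl]
  rw [hldecomp] at hw
  obtain ⟨m, hw1, hw23⟩ := isWalk_append.1 hw
  obtain ⟨m', hw2, hw3⟩ := isWalk_append.1 hw23
  have hm : m = e1.2.1 := isWalk_snoc_end hw1
  have hm' : m' = e2.2.1 := isWalk_snoc_end hw2
  obtain rfl : m = m' := by rw [hm, hm', heq]
  -- the two subwalks
  have hwB := hw2
  have hwC : IsWalk D.ImpArc s s (P1 ++ P3) := isWalk_append.2 ⟨m, hw1, hw3⟩
  -- sublists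
  have hsubB : P2.Sublist l := by
    rw [hldecomp]
    exact (List.sublist_append_left P2 P3).trans (List.sublist_append_right _ _)
  have hsubC : (P1 ++ P3).Sublist l := by
    rw [hldecomp]
    exact List.Sublist.append (List.Sublist.refl P1) (List.sublist_append_right _ _)
  have hssB := specialSimple_sublist hsubB hss
  have hssC := specialSimple_sublist hsubC hss
  -- weights
  have hwsum : wSum D.impW l = wSum D.impW (P1 ++ P3) + wSum D.impW P2 := by
    rw [hldecomp]
    simp only [wSum_append]
    ring
  -- lengths
  have hlen : l.length = P1.length + (P2.length + P3.length) := by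
    rw [hldecomp]; simp
  have hlenC : (P1 ++ P3).length = P1.length + P3.length := by simp
  have hP1len : 0 < P1.length := by simp [hP1]
  have hP2len : 0 < P2.length := by simp [hP2]
  rcases lt_or_ge (wSum D.impW P2) 0 with hneg2 | hpos2
  · have := hmin _ P2 hwB hssB hneg2
    omega
  · have hnegC : wSum D.impW (P1 ++ P3) < 0 := by linarith
    have := hmin s (P1 ++ P3) hwC hssC hnegC
    omega

end NearlyConservativePaper
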